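/- If P is an Eulerian poset of positive rank, then the local cd-index of P vanishes: ℓ^Φ_P = 0. Equivalently, Ψ_P = Ψ_{∂P}·a and Φ_{Σ̃P} = Φ_{∂P}·c. -/

import Mathlib

/-!
Let `P` be graded of positive rank `n` with `0̂` and `1̂`. Every element other than `1̂` lies
below a coatom, and every coatom has rank `n - 1` and is covered only by `1̂`, so
`∂P = P ∖ {1̂}`. A chain of `P` is a chain of `∂P`, possibly with `1̂` added, whence
`Υ_P = Υ_{∂P}·(a + b)` and, after `a ↦ a - b`, `Ψ_P = Ψ_{∂P}·a`. In `Σ̃P` the new element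
`q` has rank `n` and lies exactly above `∂P`, so the chains through `q` contribute another
`Υ_{∂P}·b`: `Υ_{Σ̃P} = Υ_{∂P}·(c + b)` and `Ψ_{Σ̃P} = Ψ_{∂P}·c`.
-/

open scoped Classical

noncomputable section

namespace CDIndex

variable {α β : Type}

/-- The natural rank function of a graded poset: `rho x` is one less than the largest
cardinality of a chain contained in `Set.Iic x` (i.e. the length of a maximal chain of
the interval `[0̂, x]`). -/
def rho [PartialOrder α] (x : α) : ℕ :=
  sSup {k : ℕ | ∃ s : Finset α,
    IsChain (· ≤ ·) (s : Set α) ∧ (s : Set α) ⊆ Set.Iic x ∧ s.card = k + 1}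

/-- A subset `S` of a poset is graded of rank `n` if every maximal chain of `S`
has exactly `n + 1` elements (i.e. length `n`). -/
def IsGradedSetOfRank [PartialOrder α] (S : Set α) (n : ℕ) : Prop :=
  ∀ s : Finset α, (s : Set α) ⊆ S → IsChain (· ≤ ·) (s : Set α) →
    (∀ t : Finset α, (t : Set α) ⊆ S → IsChain (· ≤ ·) (t : Set α) → s ⊆ t → s = t) →
    s.card = n + 1

/-- A poset is graded of rank `n` if every maximal chain has length `n`. -/
def IsGradedOfRank (α : Type) [PartialOrder α] (n : ℕ) : Prop :=
  IsGradedSetOfRank (Set.univ : Set α) n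

/-- Every interval `[s, t]` with `s < t`, `s, t ∈ S`, has equally many elements of even
rank and of odd rank. -/
def BalancedIntervalsIn [PartialOrder α] (S : Set α) : Prop :=
  ∀ s ∈ S, ∀ t ∈ S, s < t →
    {y ∈ Set.Icc s t | Even (rho y)}.ncard = {y ∈ Set.Icc s t | Odd (rho y)}.ncard

/-- An Eulerian poset of rank `n`: a graded poset with `0̂` and `1̂` in which every
interval of positive length has equally many elements of each parity of rank. -/
def IsEulerianOfRank (α : Type) [PartialOrder α] (n : ℕ) : Prop :=
  (∃ b : α, ∀ z, b ≤ z) ∧ (∃ t : α, ∀ z, z ≤ t) ∧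
    IsGradedOfRank α n ∧ BalancedIntervalsIn (Set.univ : Set α)

/-- A lower Eulerian poset of rank `n`: a graded poset with `0̂` all of whose intervals
are Eulerian. -/
def IsLowerEulerianOfRank (α : Type) [PartialOrder α] (n : ℕ) : Prop :=
  (∃ b : α, ∀ z, b ≤ z) ∧ IsGradedOfRank α n ∧ BalancedIntervalsIn (Set.univ : Set α)

/-- A lower order ideal `S` (of a poset) which is lower Eulerian of rank `n`. -/
def IsLowerEulerianSetOfRank [PartialOrder α] (S : Set α) (n : ℕ) : Prop :=
  IsGradedSetOfRank S n ∧ BalancedIntervalsIn S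

/-- The boundary of (a lower order ideal `S` of) a graded poset of rank `n`: the lower
order ideal generated by the rank `n - 1` elements which are covered by exactly one
element. -/
def boundaryIn [PartialOrder α] (S : Set α) (n : ℕ) : Set α :=
  {y | y ∈ S ∧ ∃ x ∈ S, rho x = n - 1 ∧ {z ∈ S | x ⋖ z}.ncard = 1 ∧ y ≤ x}

/-- The boundary `∂P` of a graded poset of rank `n`. -/
def boundary (α : Type) [PartialOrder α] (n : ℕ) : Set α :=
  boundaryIn (Set.univ : Set α) n

/-- `α` is a near-Eulerian poset of rank `n`: it is obtained from an Eulerian poset `Q`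
of rank `n + 1` by removing the maximal element and one element `q` of rank `n`. -/
def IsNearEulerianOfRank (α : Type) [PartialOrder α] [Finite α] (n : ℕ) : Prop :=
  ∃ (Q : Type) (_ : PartialOrder Q) (_ : Finite Q) (q top : Q),
    IsEulerianOfRank Q (n + 1) ∧ (∀ z, z ≤ top) ∧ rho q = n ∧ q ≠ top ∧
    Nonempty (α ≃o {x : Q // x ≠ q ∧ x ≠ top})

/-- `α` is (isomorphic to) the boundary of an Eulerian poset, where `α` has rank `n`
(so the Eulerian poset has rank `n + 1`). -/
def IsBoundaryOfEulerianOfRank (α : Type) [PartialOrder α] [Finite α] (n : ℕ) : Prop :=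
  ∃ (Q : Type) (_ : PartialOrder Q) (_ : Finite Q) (top : Q),
    IsEulerianOfRank Q (n + 1) ∧ (∀ z, z ≤ top) ∧
    Nonempty (α ≃o {x : Q // x ≠ top})

/-! ### The semisuspension -/

/-- The semisuspension of `α` relative to a set `S` (intended: `S = ∂α`): the poset `α`
together with one new element `q` lying above `0̂` and above every element of `S`. -/
@[ext] structure Semisusp (α : Type) (S : Set α) : Type where
  toOpt : Option α

namespace Semisusp

variable {S : Set α}

/-- The new vertex `q` of the semisuspension. -/
def q : Semisusp α S := ⟨none⟩

/-- The inclusion of `α` into its semisuspension. -/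
def incl (a : α) : Semisusp α S := ⟨some a⟩

instance instPartialOrder [PartialOrder α] [OrderBot α] : PartialOrder (Semisusp α S) where
  le x y := match x, y with
    | ⟨some a⟩, ⟨some b⟩ => a ≤ b
    | ⟨some a⟩, ⟨none⟩ => a = ⊥ ∨ ∃ s ∈ S, a ≤ s
    | ⟨none⟩, ⟨some _⟩ => False
    | ⟨none⟩, ⟨none⟩ => True
  le_refl x := by rcases x with ⟨_ | a⟩ <;> simp
  le_trans x y z hxy hyz := by
    rcases x with ⟨_ | a⟩ <;> rcases y with ⟨_ | b⟩ <;> rcases z with ⟨_ | c⟩ <;>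
      simp_all
    · rcases hyz with h | ⟨s, hs, hbs⟩
      · subst h
        exact Or.inl (le_bot_iff.mp hxy)
      · exact Or.inr ⟨s, hs, le_trans hxy hbs⟩
    · exact le_trans hxy hyz
  le_antisymm x y hxy hyx := by
    rcases x with ⟨_ | a⟩ <;> rcases y with ⟨_ | b⟩ <;> simp_all
    exact le_antisymm hxy hyx

instance [PartialOrder α] [OrderBot α] : OrderBot (Semisusp α S) where
  bot := ⟨some ⊥⟩
  bot_le x := by
    rcases x with ⟨_ | a⟩
    · exact Or.inl rfl
    · show (⊥ : α) ≤ a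
      exact bot_le

def equivOption : Semisusp α S ≃ Option α where
  toFun := toOpt
  invFun := mk
  left_inv _ := rfl
  right_inv _ := rfl

instance [Finite α] : Finite (Semisusp α S) := by
  have := Fintype.ofFinite α
  exact Finite.of_equiv (Option α) (equivOption (S := S)).symm

end Semisusp

/-! ### The flag enumerator, the `ab`-index and the `cd`-index -/

variable (K : Type) [Field K] [CharZero K]

/-- The free noncommutative algebra `K⟨a, b⟩`. -/
abbrev FA := FreeAlgebra K (Fin 2)

/-- The letter `a`. -/
def la : FA K := FreeAlgebra.ι K 0

/-- The letter `b`. -/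
def lb : FA K := FreeAlgebra.ι K 1

/-- `c = a + b`. -/
def lc : FA K := la K + lb K

/-- `d = ab + ba`. -/
def ld : FA K := la K * lb K + lb K * la K

/-- The characteristic monomial `u_S = u_1 ⋯ u_n` of a set `S` of ranks, where
`u_i = b` if `i ∈ S` and `u_i = a` otherwise. -/
def uWord (n : ℕ) (S : Set ℕ) : FA K :=
  (List.ofFn fun i : Fin n => if (i : ℕ) + 1 ∈ S then lb K else la K).prod

/-- Chains of the subposet `S` which contain the element `b0` (intended: the minimal
element of `S`). -/
def chainsIn [PartialOrder α] (S : Set α) (b0 : α) : Set (Finset α) :=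
  {C | (C : Set α) ⊆ S ∧ IsChain (· ≤ ·) (C : Set α) ∧ b0 ∈ C}

/-- The flag enumerator `Υ` of the subposet `S` with minimal element `b0`, of rank `n`;
ranks are computed relative to `b0`. -/
def upsSet [PartialOrder α] (S : Set α) (b0 : α) (n : ℕ) : FA K :=
  ∑ᶠ C ∈ chainsIn S b0, uWord K n ((fun y => rho y - rho b0) '' (C : Set α))

/-- The substitution `a ↦ a - b`, `b ↦ b` turning the flag enumerator into the
`ab`-index. -/
def toAB : FA K →ₐ[K] FA K :=
  FreeAlgebra.lift K (fun i : Fin 2 => if i = 0 then la K - lb K else lb K)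

/-- The `ab`-index `Ψ` of the subposet `S` with minimal element `b0`, of rank `n`:
`Ψ(a,b) = Υ(a-b, b)`. -/
def psiS [PartialOrder α] (S : Set α) (b0 : α) (n : ℕ) : FA K :=
  toAB K (upsSet K S b0 n)

/-- The subalgebra `K⟨c, d⟩ ⊆ K⟨a, b⟩` generated by `c = a + b` and `d = ab + ba`. -/
def cdSub : Subalgebra K (FA K) := Algebra.adjoin K {lc K, ld K}

end CDIndex

namespace CDIndex

section Rank

variable {γ δ : Type} [PartialOrder γ] [PartialOrder δ]

def chainLengths (x : γ) : Set ℕ :=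
  {k | ∃ s : Finset γ,
    IsChain (· ≤ ·) (s : Set γ) ∧ (s : Set γ) ⊆ Set.Iic x ∧ s.card = k + 1}

lemma rho_eq_sSup_chainLengths (x : γ) : rho x = sSup (chainLengths x) := rfl

lemma bddAbove_chainLengths [Finite γ] (x : γ) : BddAbove (chainLengths x) := by
  have := Fintype.ofFinite γ
  refine ⟨Fintype.card γ, ?_⟩
  rintro k ⟨s, -, -, hs⟩
  have := s.card_le_univ
  omega

lemma card_le_rho_add_one [Finite γ] {x : γ} {s : Finset γ}
    (hs : IsChain (· ≤ ·) (s : Set γ)) (hsx : (s : Set γ) ⊆ Set.Iic x) :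
    s.card ≤ rho x + 1 := by
  rcases Nat.eq_zero_or_pos s.card with h | h
  · omega
  have := le_csSup (bddAbove_chainLengths x) ⟨s, hs, hsx, (Nat.sub_add_cancel h).symm⟩
  rw [rho_eq_sSup_chainLengths]
  omega

lemma exists_chain_card_eq_rho_add_one [Finite γ] (x : γ) :
    ∃ s : Finset γ, IsChain (· ≤ ·) (s : Set γ) ∧ (s : Set γ) ⊆ Set.Iic x ∧
      s.card = rho x + 1 :=
  Nat.sSup_mem (s := chainLengths x) ⟨0, {x}, by simp, by simp, by simp⟩
    (bddAbove_chainLengths x)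

lemma rho_strictMono [Finite γ] : StrictMono (rho : γ → ℕ) := by
  intro x y hxy
  obtain ⟨s, hs, hsx, hcard⟩ := exists_chain_card_eq_rho_add_one x
  have hy : y ∉ s := fun hy => (hsx hy).not_gt hxy
  have := card_le_rho_add_one (x := y) (s := insert y s)
    (by rw [Finset.coe_insert]; exact hs.insert fun b hb _ => Or.inr ((hsx hb).trans hxy.le))
    (by
      rw [Finset.coe_insert]
      exact Set.insert_subset le_rfl (hsx.trans (Set.Iic_subset_Iic.2 hxy.le)))
  rw [Finset.card_insert_of_notMem hy] at this
  omega

lemma rho_bot [OrderBot γ] [Finite γ] : rho (⊥ : γ) = 0 := by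
  obtain ⟨s, -, hs, hcard⟩ := exists_chain_card_eq_rho_add_one (⊥ : γ)
  have := Finset.card_le_card (t := {⊥}) fun y hy => Finset.mem_singleton.2 (le_bot_iff.1 (hs hy))
  rw [Finset.card_singleton] at this
  omega

lemma exists_lt_rho_le_rho_add_one [Finite γ] {x : γ} (hx : 0 < rho x) :
    ∃ y < x, rho x ≤ rho y + 1 := by
  obtain ⟨s, hs, hsx, hcard⟩ := exists_chain_card_eq_rho_add_one x
  have herase := Finset.pred_card_le_card_erase (s := s) (a := x)
  obtain ⟨y, hy⟩ := (s.erase x).exists_maximal (Finset.card_pos.1 (by omega))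
  have hys := Finset.mem_erase.1 hy.prop
  have hle : ∀ z ∈ s.erase x, z ≤ y := fun z hz =>
    (hs.total (Finset.mem_of_mem_erase hz) hys.2).elim id (hy.2 hz)
  refine ⟨y, lt_of_le_of_ne (hsx hys.2) hys.1, ?_⟩
  have := card_le_rho_add_one (hs.mono (Finset.coe_subset.2 (s.erase_subset x))) hle
  omega

lemma rho_eq_add_one_of_forall_lt [Finite γ] {x : γ} {m : ℕ} (hlt : ∀ y < x, rho y ≤ m)
    (hex : ∃ y < x, rho y = m) : rho x = m + 1 := by
  obtain ⟨y, hyx, rfl⟩ := hex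
  have := rho_strictMono hyx
  obtain ⟨z, hzx, hz⟩ := exists_lt_rho_le_rho_add_one (x := x) (by omega)
  have := hlt z hzx
  omega

lemma rho_map_of_isLowerSet_range (f : γ ↪o δ) (hf : IsLowerSet (Set.range f)) (x : γ) :
    rho (f x) = rho x := by
  rw [rho_eq_sSup_chainLengths, rho_eq_sSup_chainLengths]
  congr 1
  ext k
  constructor
  · rintro ⟨s, hs, hsx, hcard⟩
    have hsf : (s : Set δ) ⊆ f '' Set.univ := fun y hy => by
      simpa using hf (hsx hy) ⟨x, rfl⟩
    obtain ⟨u, -, rfl⟩ := Finset.subset_set_image_iff.1 hsf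
    rw [Finset.coe_image] at hs hsx
    refine ⟨u, IsChain.image_embedding_iff.1 hs,
      fun y hy => f.le_iff_le.1 (hsx ⟨y, hy, rfl⟩), ?_⟩
    rwa [Finset.card_image_of_injective _ f.injective] at hcard
  · rintro ⟨s, hs, hsx, hcard⟩
    refine ⟨s.image f, ?_, ?_, by rwa [Finset.card_image_of_injective _ f.injective]⟩
    · rw [Finset.coe_image]
      exact hs.image f
    · rw [Finset.coe_image]
      rintro _ ⟨y, hy, rfl⟩
      exact f.le_iff_le.2 (hsx hy)

end Rank

section Graded

variable {γ : Type} [PartialOrder γ] [Finite γ] {n : ℕ}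

lemma IsGradedOfRank.exists_superset_card_eq (hg : IsGradedOfRank γ n) {s : Finset γ}
    (hs : IsChain (· ≤ ·) (s : Set γ)) :
    ∃ t : Finset γ, s ⊆ t ∧ IsChain (· ≤ ·) (t : Set γ) ∧ t.card = n + 1 := by
  obtain ⟨M, hM, hsM⟩ := hs.exists_maxChain
  lift M to Finset γ using M.toFinite
  exact ⟨M, Finset.coe_subset.1 hsM, hM.1, hg M (Set.subset_univ _) hM.1
    fun t _ ht hMt => Finset.coe_injective (hM.2 ht (Finset.coe_subset.2 hMt))⟩

lemma IsGradedOfRank.card_le (hg : IsGradedOfRank γ n) {s : Finset γ}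
    (hs : IsChain (· ≤ ·) (s : Set γ)) : s.card ≤ n + 1 := by
  obtain ⟨t, hst, -, ht⟩ := hg.exists_superset_card_eq hs
  exact ht ▸ Finset.card_le_card hst

variable [OrderTop γ]

lemma IsGradedOfRank.rho_top (hg : IsGradedOfRank γ n) : rho (⊤ : γ) = n := by
  obtain ⟨t, -, ht, htcard⟩ := hg.exists_superset_card_eq (s := ∅) (by simp)
  obtain ⟨s, hs, -, hscard⟩ := exists_chain_card_eq_rho_add_one (⊤ : γ)
  have := card_le_rho_add_one ht fun _ _ => le_top
  have := hg.card_le hs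
  omega

lemma IsGradedOfRank.rho_lt_of_ne_top (hg : IsGradedOfRank γ n) {x : γ} (hx : x ≠ ⊤) :
    rho x < n :=
  hg.rho_top ▸ rho_strictMono (lt_top_iff_ne_top.2 hx)

lemma IsGradedOfRank.bot_ne_top [OrderBot γ] (hg : IsGradedOfRank γ n) (hn : 0 < n) :
    (⊥ : γ) ≠ ⊤ := fun h => by
  have := hg.rho_top
  rw [← h, rho_bot] at this
  omega

lemma IsGradedOfRank.rho_of_isCoatom (hg : IsGradedOfRank γ n) {x : γ} (hx : IsCoatom x) :
    rho x = n - 1 := by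
  obtain ⟨t, hxt, ht, htcard⟩ := hg.exists_superset_card_eq (s := {x, ⊤})
    (by simpa using (Set.subsingleton_singleton.isChain).insert fun b hb _ =>
      Or.inl (le_top.trans_eq (Set.mem_singleton_iff.1 hb).symm))
  have hxt' : x ∈ t := hxt (Finset.mem_insert_self _ _)
  have htopt : ⊤ ∈ t := hxt (by simp)
  have hsub : ((t.erase ⊤ : Finset γ) : Set γ) ⊆ Set.Iic x := fun z hz => by
    obtain ⟨hztop, hzt⟩ := Finset.mem_erase.1 hz
    rcases ht.total hzt hxt' with hzx | hxz
    · exact hzx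
    rcases hxz.eq_or_lt with rfl | hlt
    · exact le_rfl
    · exact absurd (hx.lt_iff.1 hlt) hztop
  have h1 := card_le_rho_add_one (ht.mono (Finset.coe_subset.2 (t.erase_subset ⊤))) hsub
  have h2 := hg.rho_lt_of_ne_top hx.ne_top
  rw [Finset.card_erase_of_mem htopt] at h1
  omega

lemma IsGradedOfRank.boundary_eq (hg : IsGradedOfRank γ n) (hn : 0 < n) :
    boundary γ n = {⊤}ᶜ := by
  ext y
  simp only [boundary, boundaryIn, Set.mem_univ, true_and,
    Set.mem_compl_singleton_iff]
  constructor
  · rintro ⟨x, hx, -, hyx⟩ rfl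
    rw [top_le_iff.1 hyx, hg.rho_top] at hx
    omega
  · intro hy
    obtain ⟨x, hx, hyx⟩ := (eq_top_or_exists_le_coatom y).resolve_left hy
    have hcov : {z | x ⋖ z} = {⊤} :=
      Set.ext fun z => ⟨fun h => hx.lt_iff.1 h.lt, fun h => h ▸ hx.covBy_top⟩
    exact ⟨x, hg.rho_of_isCoatom hx, by rw [hcov, Set.ncard_singleton], hyx⟩

end Graded

variable (K : Type) [Field K]

lemma uWord_succ (m : ℕ) (R : Set ℕ) :
    uWord K (m + 1) R = uWord K m R * (if m + 1 ∈ R then lb K else la K) := by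
  rw [uWord, List.ofFn_succ', List.prod_concat]
  rfl

lemma uWord_insert_of_lt {m k : ℕ} (hmk : m < k) (R : Set ℕ) :
    uWord K m (insert k R) = uWord K m R := by
  simp only [uWord, Set.mem_insert_iff]
  congr
  funext i
  simp [show (i : ℕ) + 1 ≠ k by omega]

section Chains

variable {γ δ : Type} [PartialOrder γ] [PartialOrder δ]

lemma chainsIn_insert {S : Set γ} {t b0 : γ} (hb0 : b0 ≠ t)
    (ht : ∀ s ∈ S, ¬ t < s) :
    chainsIn (insert t S) b0 = chainsIn S b0 ∪ insert t '' chainsIn {s ∈ S | s ≤ t} b0 := by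
  ext C
  simp only [chainsIn, Set.mem_union, Set.mem_image, Set.mem_ofPred_eq]
  constructor
  · rintro ⟨hCS, hC, hb⟩
    by_cases htC : t ∈ C
    · refine Or.inr ⟨C.erase t, ⟨fun s hs => ?_,
        hC.mono (Finset.coe_subset.2 (C.erase_subset t)), Finset.mem_erase.2 ⟨hb0, hb⟩⟩,
        Finset.insert_erase htC⟩
      obtain ⟨hst, hsC⟩ := Finset.mem_erase.1 hs
      have hsS : s ∈ S := (hCS hsC).resolve_left hst
      exact ⟨hsS, (hC.total hsC htC).resolve_right fun hts => ht s hsS (hts.lt_of_ne hst.symm)⟩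
    · exact Or.inl ⟨fun s hs => (hCS hs).resolve_left fun h => htC (h ▸ hs), hC, hb⟩
  · rintro (⟨hCS, hC, hb⟩ | ⟨C, ⟨hCS, hC, hb⟩, rfl⟩)
    · exact ⟨hCS.trans (Set.subset_insert _ _), hC, hb⟩
    · rw [Finset.coe_insert]
      exact ⟨Set.insert_subset_insert fun s hs => (hCS hs).1,
        hC.insert fun s hs _ => Or.inr (hCS hs).2, Finset.mem_insert_of_mem hb⟩

lemma chainsIn_image (f : γ ↪o δ) (S : Set γ) (b0 : γ) :
    chainsIn (f '' S) (f b0) = Finset.image f '' chainsIn S b0 := by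
  ext C
  constructor
  · rintro ⟨hCS, hC, hb⟩
    obtain ⟨u, huS, rfl⟩ := Finset.subset_set_image_iff.1 hCS
    rw [Finset.coe_image] at hC
    obtain ⟨x, hx, hfx⟩ := Finset.mem_image.1 hb
    exact ⟨u, ⟨huS, IsChain.image_embedding_iff.1 hC, f.injective hfx ▸ hx⟩, rfl⟩
  · rintro ⟨u, ⟨huS, hu, hb⟩, rfl⟩
    rw [chainsIn, Set.mem_ofPred_eq, Finset.coe_image]
    exact ⟨Set.image_mono huS, hu.image f, Finset.mem_image_of_mem f hb⟩

lemma upsSet_image (f : γ ↪o δ) (hf : ∀ x, rho (f x) = rho x) (S : Set γ) (b0 : γ)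
    (m : ℕ) :
    upsSet K (f '' S) (f b0) m = upsSet K S b0 m := by
  rw [upsSet, chainsIn_image,
    finsum_mem_image fun C _ D _ h => Finset.image_injective f.injective h]
  refine finsum_mem_congr rfl fun C _ => ?_
  rw [Finset.coe_image, Set.image_image]
  simp only [hf]

variable [Finite γ] {S : Set γ} {b0 : γ} {m : ℕ}

lemma upsSet_succ_of_forall_rho_le (hS : ∀ s ∈ S, rho s - rho b0 ≤ m) :
    upsSet K S b0 (m + 1) = upsSet K S b0 m * la K := by
  rw [upsSet, upsSet, finsum_mem_mul' _ _ (Set.toFinite _)]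
  refine finsum_mem_congr rfl fun C hC => ?_
  rw [uWord_succ, if_neg]
  rintro ⟨s, hs, hrs : rho s - rho b0 = m + 1⟩
  have := hS s (hC.1 hs)
  omega

lemma upsSet_insert {t : γ} (htS : t ∉ S) (ht : ∀ s ∈ S, ¬ t < s)
    (hrt : rho t - rho b0 = m + 1) (hrS : ∀ s ∈ S, s ≤ t → rho s - rho b0 ≤ m) :
    upsSet K (insert t S) b0 (m + 1) =
      upsSet K S b0 (m + 1) + upsSet K {s ∈ S | s ≤ t} b0 m * lb K := by
  have hb0 : b0 ≠ t := by
    rintro rfl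
    omega
  have hdisj : Disjoint (chainsIn S b0) (insert t '' chainsIn {s ∈ S | s ≤ t} b0) :=
    Set.disjoint_left.2 fun C hC ⟨C', _, hC'⟩ =>
      htS (hC.1 (hC' ▸ Finset.mem_insert_self t C'))
  have hinj : Set.InjOn (insert t) (chainsIn {s ∈ S | s ≤ t} b0) := fun C hC D hD h => by
    have htC : t ∉ C := fun h => htS (hC.1 h).1
    have htD : t ∉ D := fun h => htS (hD.1 h).1
    rw [← Finset.erase_insert htC, ← Finset.erase_insert htD, h]
  rw [upsSet, chainsIn_insert hb0 ht,
    finsum_mem_union hdisj (Set.toFinite _) (Set.toFinite _), finsum_mem_image hinj, upsSet,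
    upsSet, finsum_mem_mul' _ _ (Set.toFinite _)]
  congr 1
  refine finsum_mem_congr rfl fun C hC => ?_
  rw [Finset.coe_insert, Set.image_insert_eq, uWord_succ, hrt, if_pos (Set.mem_insert _ _),
    uWord_insert_of_lt K m.lt_succ_self]

end Chains

namespace Semisusp

variable {α : Type} [PartialOrder α] [OrderBot α] {S : Set α}

def inclEmbedding : α ↪o Semisusp α S :=
  OrderEmbedding.ofMapLEIff incl fun _ _ => Iff.rfl

lemma bot_eq_inclEmbedding_bot : (⊥ : Semisusp α S) = inclEmbedding ⊥ := rfl

lemma eq_q_or_mem_range_inclEmbedding (w : Semisusp α S) :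
    w = q ∨ w ∈ Set.range (inclEmbedding : α ↪o Semisusp α S) := by
  rcases w with ⟨_ | a⟩
  · exact Or.inl rfl
  · exact Or.inr ⟨a, rfl⟩

lemma q_notMem_range_inclEmbedding : q ∉ Set.range (inclEmbedding : α ↪o Semisusp α S) := by
  rintro ⟨a, ⟨⟩⟩

lemma not_q_le_inclEmbedding (a : α) : ¬ (q : Semisusp α S) ≤ inclEmbedding a := id

lemma inclEmbedding_le_q_iff (hS : IsLowerSet S) (hbot : ⊥ ∈ S) {a : α} :
    (inclEmbedding a : Semisusp α S) ≤ q ↔ a ∈ S :=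
  ⟨fun h => h.elim (fun ha => ha ▸ hbot) fun ⟨_, hs, has⟩ => hS has hs,
    fun ha => Or.inr ⟨a, ha, le_rfl⟩⟩

lemma isLowerSet_range_inclEmbedding :
    IsLowerSet (Set.range (inclEmbedding : α ↪o Semisusp α S)) := by
  rintro _ w hw ⟨a, rfl⟩
  exact (eq_q_or_mem_range_inclEmbedding w).resolve_left
    fun hq => not_q_le_inclEmbedding a (hq ▸ hw)

lemma rho_inclEmbedding (a : α) : rho (inclEmbedding a : Semisusp α S) = rho a :=
  rho_map_of_isLowerSet_range _ isLowerSet_range_inclEmbedding a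

end Semisusp

section BoundedGraded

open Semisusp

variable {α : Type} [PartialOrder α] [Finite α] [OrderBot α] [OrderTop α] {m : ℕ}

lemma upsSet_univ_of_isGradedOfRank (hg : IsGradedOfRank α (m + 1)) :
    upsSet K (Set.univ : Set α) ⊥ (m + 1) = upsSet K (boundary α (m + 1)) ⊥ m * lc K := by
  have hB := hg.boundary_eq m.succ_pos
  have hrB : ∀ s ∈ boundary α (m + 1), rho s - rho (⊥ : α) ≤ m := fun s hs => by
    have := hg.rho_lt_of_ne_top (hB ▸ hs)
    omega
  have huniv : (Set.univ : Set α) = insert ⊤ (boundary α (m + 1)) := by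
    rw [hB, Set.insert_eq, Set.union_compl_self]
  rw [huniv, upsSet_insert K (by simp [hB]) (fun _ _ => not_top_lt)
      (by rw [hg.rho_top, rho_bot, Nat.sub_zero]) fun s hs _ => hrB s hs,
    upsSet_succ_of_forall_rho_le K hrB, lc, mul_add]
  simp only [le_top, Set.sep_true]

lemma inclEmbedding_le_q_iff_ne_top (hg : IsGradedOfRank α (m + 1)) {a : α} :
    (inclEmbedding a : Semisusp α (boundary α (m + 1))) ≤ q ↔ a ≠ ⊤ := by
  have hB := hg.boundary_eq m.succ_pos
  have hlower : IsLowerSet (boundary α (m + 1)) := by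
    rw [hB]
    exact fun _ _ hba ha hb => ha (top_le_iff.1 (hb ▸ hba))
  have hbot : ⊥ ∈ boundary α (m + 1) := by
    rw [hB]
    exact hg.bot_ne_top m.succ_pos
  rw [inclEmbedding_le_q_iff hlower hbot, hB, Set.mem_compl_singleton_iff]

lemma rho_q_of_isGradedOfRank (hg : IsGradedOfRank α (m + 1)) :
    rho (q : Semisusp α (boundary α (m + 1))) = m + 1 := by
  refine rho_eq_add_one_of_forall_lt (fun w hw => ?_) ?_
  · obtain ⟨a, rfl⟩ := (eq_q_or_mem_range_inclEmbedding w).resolve_left hw.ne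
    have := hg.rho_lt_of_ne_top ((inclEmbedding_le_q_iff_ne_top hg).1 hw.le)
    rw [rho_inclEmbedding]
    omega
  · obtain ⟨x, hx, -⟩ :=
      (eq_top_or_exists_le_coatom (⊥ : α)).resolve_left (hg.bot_ne_top m.succ_pos)
    refine ⟨inclEmbedding x, ((inclEmbedding_le_q_iff_ne_top hg).2 hx.ne_top).lt_of_ne
      fun h => q_notMem_range_inclEmbedding ⟨x, h⟩, ?_⟩
    rw [rho_inclEmbedding, hg.rho_of_isCoatom hx, Nat.add_sub_cancel]

lemma upsSet_semisusp_of_isGradedOfRank (hg : IsGradedOfRank α (m + 1)) :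
    upsSet K (Set.univ : Set (Semisusp α (boundary α (m + 1)))) ⊥ (m + 1) =
      upsSet K (boundary α (m + 1)) ⊥ m * (lc K + lb K) := by
  have hB := hg.boundary_eq m.succ_pos
  have huniv : (Set.univ : Set (Semisusp α (boundary α (m + 1)))) =
      insert q (Set.range inclEmbedding) :=
    (Set.eq_univ_of_forall eq_q_or_mem_range_inclEmbedding).symm
  have hbelow_q : {w ∈ Set.range inclEmbedding | w ≤ (q : Semisusp α (boundary α (m + 1)))} =
      inclEmbedding '' boundary α (m + 1) := by
    ext w
    constructor
    · rintro ⟨⟨a, rfl⟩, h⟩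
      exact ⟨a, hB ▸ (inclEmbedding_le_q_iff_ne_top hg).1 h, rfl⟩
    · rintro ⟨a, ha, rfl⟩
      exact ⟨⟨a, rfl⟩, (inclEmbedding_le_q_iff_ne_top hg).2 (by rwa [hB] at ha)⟩
  have hrank : ∀ w ∈ Set.range inclEmbedding, w ≤ (q : Semisusp α (boundary α (m + 1))) →
      rho w - rho (⊥ : Semisusp α (boundary α (m + 1))) ≤ m := by
    rintro _ ⟨a, rfl⟩ h
    have := hg.rho_lt_of_ne_top ((inclEmbedding_le_q_iff_ne_top hg).1 h)
    rw [rho_inclEmbedding, rho_bot]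
    omega
  rw [huniv, upsSet_insert K q_notMem_range_inclEmbedding
      (by rintro _ ⟨a, rfl⟩ h; exact not_q_le_inclEmbedding a h.le)
      (by rw [rho_q_of_isGradedOfRank hg, rho_bot, Nat.sub_zero]) hrank,
    hbelow_q, ← Set.image_univ, bot_eq_inclEmbedding_bot,
    upsSet_image K _ rho_inclEmbedding, upsSet_image K _ rho_inclEmbedding,
    upsSet_univ_of_isGradedOfRank K hg, mul_add]

end BoundedGraded

lemma toAB_lb : toAB K (lb K) = lb K := by
  simp [toAB, lb]

lemma toAB_lc : toAB K (lc K) = la K := by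
  simp [toAB, lc, la, lb]

/-- If `P` is an Eulerian poset of positive rank `n`, then the local
`cd`-index of `P` vanishes: `ℓ^Φ_P = Φ_{Σ̃P} - Φ_{∂P}·c = 0`; equivalently
`Ψ_P = Ψ_{∂P}·a` and `Φ_{Σ̃P} = Φ_{∂P}·c`. -/
theorem localCdIndex_eulerian_eq_zero
    (K : Type) [Field K] [CharZero K]
    (α : Type) [PartialOrder α] [Finite α] [OrderBot α] [OrderTop α] (n : ℕ) (hn : 0 < n)
    (h : IsEulerianOfRank α n) :
    psiS K (Set.univ : Set (Semisusp α (boundary α n))) ⊥ n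
        - psiS K (boundary α n) ⊥ (n - 1) * lc K = 0 ∧
    psiS K (Set.univ : Set α) ⊥ n = psiS K (boundary α n) ⊥ (n - 1) * la K ∧
    psiS K (Set.univ : Set (Semisusp α (boundary α n))) ⊥ n
      = psiS K (boundary α n) ⊥ (n - 1) * lc K := by
  obtain ⟨m, rfl⟩ := Nat.exists_eq_add_one_of_ne_zero hn.ne'
  have hg : IsGradedOfRank α (m + 1) := h.2.2.1
  have hsemisusp : psiS K (Set.univ : Set (Semisusp α (boundary α (m + 1)))) ⊥ (m + 1) =
      psiS K (boundary α (m + 1)) ⊥ m * lc K := by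
    rw [psiS, upsSet_semisusp_of_isGradedOfRank K hg, map_mul, map_add, toAB_lc, toAB_lb, psiS,
      lc]
  rw [Nat.add_sub_cancel]
  refine ⟨sub_eq_zero_of_eq hsemisusp, ?_, hsemisusp⟩
  rw [psiS, upsSet_univ_of_isGradedOfRank K hg, map_mul, toAB_lc, psiS]

end CDIndex
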